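/- Let b > 1 and n > 1 be integers, a a positive integer, and i ∈ {3, …, n} with gcd(r_b(i), a) = 1 and gcd(r_b(i-1), a) = 1. Then ω ∈ Ap(S_a(b,i), r_b(i)) if and only if either ω = b·a^{(i)}_i, or there exist ω' ∈ Ap(S_a(b,i-1), r_b(i-1)) and u_i ∈ {0, …, b−1} such that ω = ω' + b^{i-1}·m(ω') + u_i·a^{(i)}_i, where m(ω') denotes the (unique) length of ω' as a sum of the generators a^{(i-1)}_1, …, a^{(i-1)}_{i-1} of S_a(b,i-1). -/

import Mathlib

/-- The repunit number in base `b` of length `ℓ`: `r_b(ℓ) = ∑_{j=0}^{ℓ-1} b^j`. -/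
def repunit (b ℓ : ℕ) : ℕ := ∑ j ∈ Finset.range ℓ, b ^ j

/-- `aseq b a i j = a^{(i)}_j = r_b(i) + a·r_b(j-1)`. -/
def aseq (b a i j : ℕ) : ℕ := repunit b i + a * repunit b (j - 1)

/-- The additive submonoid `S_a(b,i)` of `ℕ` generated by `{a^{(i)}_j : j ≥ 1}`. -/
def grep (b a i : ℕ) : AddSubmonoid ℕ :=
  AddSubmonoid.closure {x | ∃ j, 1 ≤ j ∧ x = aseq b a i j}

/-- The Apéry set of `S` with respect to `s`: elements `ω ∈ S` with `ω - s ∉ S`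
(i.e. there is no `t ∈ S` with `ω = t + s`). -/
def Apery (S : AddSubmonoid ℕ) (s : ℕ) : Set ℕ :=
  {ω | ω ∈ S ∧ ¬ ∃ t ∈ S, ω = t + s}

/-- `IsLength b a i ω m` says that `m` is a length of `ω` as an `ℕ`-linear combination of
the minimal generators `a^{(i)}_1, …, a^{(i)}_i` of `S_a(b,i)` (the coordinate `j : Fin i`
is the coefficient of `a^{(i)}_{j+1}`).  For elements of the Apéry set this length is
unique, since the semigroups `S_a(b,i)` are homogeneous. -/
def IsLength (b a i ω m : ℕ) : Prop :=
  ∃ u : Fin i → ℕ, ω = ∑ j : Fin i, u j * aseq b a i (j.val + 1) ∧ m = ∑ j : Fin i, u j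

lemma repunit_zero (b : ℕ) : repunit b 0 = 0 := by simp [repunit]

lemma repunit_one (b : ℕ) : repunit b 1 = 1 := by simp [repunit]

lemma repunit_succ (b n : ℕ) : repunit b (n + 1) = b * repunit b n + 1 := by
  simp only [repunit, Finset.sum_range_succ', pow_succ', ← Finset.mul_sum, pow_zero]

lemma repunit_succ' (b n : ℕ) : repunit b (n + 1) = repunit b n + b ^ n := by
  rw [repunit, Finset.sum_range_succ, ← repunit]

lemma repunit_pos (b : ℕ) {n : ℕ} (hn : 1 ≤ n) : 0 < repunit b n := by
  obtain ⟨m, rfl⟩ : ∃ m, n = m + 1 := ⟨n - 1, by omega⟩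
  rw [repunit_succ]; omega

lemma repunit_mono (b : ℕ) {m n : ℕ} (h : m ≤ n) : repunit b m ≤ repunit b n := by
  exact Finset.sum_le_sum_of_subset (Finset.range_subset_range.2 h)

lemma repunit_lt (b : ℕ) (hb : 1 ≤ b) (n : ℕ) : repunit b n < repunit b (n + 1) := by
  rw [repunit_succ']
  have : 0 < b ^ n := Nat.pow_pos hb
  omega

lemma repunit_add (b m n : ℕ) : repunit b (m + n) = repunit b n + b ^ n * repunit b m := by
  induction m with
  | zero => simp [repunit]
  | succ m ih =>
    have : m + 1 + n = (m + n) + 1 := by omega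
    rw [this, repunit_succ', ih, repunit_succ', pow_add]
    ring

/-- Greedy coin count for coins `repunit b 1, …, repunit b (i-1)` (levels `i ≥ 2`). -/
def Lg (b : ℕ) : ℕ → ℕ → ℕ
  | 0, N => N
  | 1, N => N
  | 2, N => N
  | (i+3), N => N / repunit b (i+2) + Lg b (i+2) (N % repunit b (i+2))

lemma Lg_two (b N : ℕ) : Lg b 2 N = N := rfl

lemma Lg_succ (b k N : ℕ) :
    Lg b (k+3) N = N / repunit b (k+2) + Lg b (k+2) (N % repunit b (k+2)) := rfl

lemma Lg_zero (b i : ℕ) : Lg b i 0 = 0 := by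
  match i with
  | 0 => rfl
  | 1 => rfl
  | 2 => rfl
  | (k+3) => rw [Lg_succ, Nat.zero_div, Nat.zero_mod, Lg_zero]

lemma Lg_step (b k N : ℕ) (hb : 1 ≤ b) :
    Lg b (k+2) (N + repunit b (k+1)) = Lg b (k+2) N + 1 := by
  match k with
  | 0 => rw [repunit_one]; rfl
  | (k+1) =>
    have hr : 0 < repunit b (k+2) := repunit_pos b (by omega)
    rw [Lg_succ, Lg_succ, Nat.add_div_right _ hr, Nat.add_mod_right]
    simp only [show k + 1 + 1 = k + 2 from rfl]
    omega

lemma Lg_step_mul (b k N c : ℕ) (hb : 1 ≤ b) :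
    Lg b (k+2) (N + c * repunit b (k+1)) = Lg b (k+2) N + c := by
  induction c with
  | zero => simp
  | succ c ih =>
    have : N + (c + 1) * repunit b (k+1) = (N + c * repunit b (k+1)) + repunit b (k+1) := by ring
    rw [this, Lg_step b k _ hb, ih]
    omega

lemma repunit_succ2 (b k : ℕ) : repunit b (k+2) = b * repunit b (k+1) + 1 :=
  repunit_succ b (k+1)

lemma Lg_lipschitz (b : ℕ) (hb : 1 ≤ b) (k : ℕ) :
    ∀ N, Lg b (k+2) N ≤ Lg b (k+2) (N + 1) + (b - 1) := by
  induction k with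
  | zero => intro N; rw [Lg_two, Lg_two]; omega
  | succ k ih =>
    intro N
    have hr : 0 < repunit b (k+2) := repunit_pos b (by omega)
    have hdm : N % repunit b (k+2) + N / repunit b (k+2) * repunit b (k+2) = N :=
      Nat.mod_add_div' N (repunit b (k+2))
    set r := repunit b (k+2) with hrdef
    set q := N / r with hq
    set s := N % r with hs
    have hslt : s < r := Nat.mod_lt _ hr
    have goal_eq : Lg b (k+1+2) N = q + Lg b (k+2) s := Lg_succ b k N
    by_cases hcase : s + 1 = r
    · have h1 : N + 1 = (q + 1) * r := by
        have : N + 1 = s + 1 + q * r := by omega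
        rw [this, hcase]; ring
      have hdiv : (N + 1) / r = q + 1 := by rw [h1, Nat.mul_div_cancel _ hr]
      have hmod : (N + 1) % r = 0 := by rw [h1, Nat.mul_mod_left]
      have goal_eq2 : Lg b (k+1+2) (N + 1) = q + 1 := by
        rw [Lg_succ b k (N+1), hdiv, hmod, Lg_zero]
      rw [goal_eq, goal_eq2]
      have hsval : s = b * repunit b (k+1) := by
        have := repunit_succ2 b k; omega
      have hLs : Lg b (k+2) s = b := by
        rw [hsval, show b * repunit b (k+1) = 0 + b * repunit b (k+1) by omega,
          Lg_step_mul b k 0 b hb, Lg_zero]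
        omega
      omega
    · have h1 : N + 1 = (s + 1) + q * r := by omega
      have hdiv : (N + 1) / r = q := by
        rw [h1, Nat.add_mul_div_right _ _ hr, Nat.div_eq_of_lt (by omega)]
        omega
      have hmod : (N + 1) % r = s + 1 := by
        rw [h1, Nat.add_mul_mod_self_right, Nat.mod_eq_of_lt (by omega)]
      have goal_eq2 : Lg b (k+1+2) (N + 1) = q + Lg b (k+2) (s+1) := by
        rw [Lg_succ b k (N+1), hdiv, hmod]
      rw [goal_eq, goal_eq2]
      have := ih s
      omega

lemma Lg_add_self (b : ℕ) (hb : 1 ≤ b) (k N : ℕ) :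
    Lg b (k+2) N + 1 ≤ Lg b (k+2) (N + repunit b (k+2)) := by
  have h1 : N + repunit b (k+2) = (N + 1) + b * repunit b (k+1) := by
    have := repunit_succ2 b k; omega
  rw [h1, Lg_step_mul b k (N+1) b hb]
  have := Lg_lipschitz b hb k N
  omega

lemma Lg_add_mul_self (b : ℕ) (hb : 1 ≤ b) (k N t : ℕ) :
    Lg b (k+2) N + t ≤ Lg b (k+2) (N + t * repunit b (k+2)) := by
  induction t with
  | zero => simp
  | succ t ih =>
    have h1 : N + (t + 1) * repunit b (k+2) = (N + t * repunit b (k+2)) + repunit b (k+2) := by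
      ring
    rw [h1]
    have := Lg_add_self b hb k (N + t * repunit b (k+2))
    omega

lemma Lg_le_pred (b : ℕ) (hb : 1 ≤ b) (k M : ℕ) : Lg b (k+3) M ≤ Lg b (k+2) M := by
  have h1 : M % repunit b (k+2) + (M / repunit b (k+2)) * repunit b (k+2) = M :=
    Nat.mod_add_div' M (repunit b (k+2))
  have h2 := Lg_add_mul_self b hb k (M % repunit b (k+2)) (M / repunit b (k+2))
  rw [h1] at h2
  rw [Lg_succ]
  omega

lemma Lg_realize (b : ℕ) (hb : 1 ≤ b) (k : ℕ) :
    ∀ N, ∃ w : Fin (k+1) → ℕ,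
      (∑ j, w j * repunit b (j.val + 1)) = N ∧ (∑ j, w j) = Lg b (k+2) N := by
  induction k with
  | zero =>
    intro N
    exact ⟨fun _ => N, by simp [repunit_one], by simp [Lg_two]⟩
  | succ k ih =>
    intro N
    have hr : 0 < repunit b (k+2) := repunit_pos b (by omega)
    obtain ⟨w, hw1, hw2⟩ := ih (N % repunit b (k+2))
    refine ⟨Fin.snoc w (N / repunit b (k+2)), ?_, ?_⟩
    · simp only [Fin.sum_univ_castSucc, Fin.snoc_castSucc, Fin.snoc_last, Fin.val_last,
        Fin.coe_castSucc] at hw1 ⊢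
      have h2 : N % repunit b (k+2) + N / repunit b (k+2) * repunit b (k+2) = N :=
        Nat.mod_add_div' N (repunit b (k+2))
      have h3 : repunit b (k+1+1) = repunit b (k+2) := rfl
      rw [h3]
      omega
    · simp only [Fin.sum_univ_castSucc, Fin.snoc_castSucc, Fin.snoc_last, Fin.val_last,
        Fin.coe_castSucc] at hw2 ⊢
      have : Lg b (k+1+2) N = N / repunit b (k+2) + Lg b (k+2) (N % repunit b (k+2)) :=
        Lg_succ b k N
      omega

lemma Lg_opt (b : ℕ) (hb : 1 ≤ b) (k : ℕ) :
    ∀ w : Fin (k+1) → ℕ, Lg b (k+2) (∑ j, w j * repunit b (j.val + 1)) ≤ ∑ j, w j := by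
  induction k with
  | zero =>
    intro w
    rw [Fin.sum_univ_one, Fin.sum_univ_one, Lg_two]
    simp [repunit_one]
  | succ k ih =>
    intro w
    rw [Fin.sum_univ_castSucc (f := fun j : Fin (k+2) => w j * repunit b (j.val + 1)),
      Fin.sum_univ_castSucc (f := fun j : Fin (k+2) => w j)]
    simp only [Fin.coe_castSucc, Fin.val_last]
    set M := ∑ j : Fin (k+1), w j.castSucc * repunit b (j.val + 1) with hM
    have h1 : Lg b (k+1+2) (M + w (Fin.last (k+1)) * repunit b (k+1+1)) =
        Lg b (k+1+2) M + w (Fin.last (k+1)) := Lg_step_mul b (k+1) M _ hb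
    rw [h1]
    have h2 : Lg b (k+1+2) M ≤ Lg b (k+2) M := Lg_le_pred b hb k M
    have h3 := ih (fun j => w j.castSucc)
    rw [← hM] at h3
    omega

lemma Lg_subadd (b : ℕ) (hb : 1 ≤ b) (k M N : ℕ) :
    Lg b (k+2) (M + N) ≤ Lg b (k+2) M + Lg b (k+2) N := by
  obtain ⟨w1, hw11, hw12⟩ := Lg_realize b hb k M
  obtain ⟨w2, hw21, hw22⟩ := Lg_realize b hb k N
  have h1 : (∑ j, (w1 + w2) j * repunit b (j.val + 1)) = M + N := by
    simp only [Pi.add_apply, add_mul]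
    rw [Finset.sum_add_distrib, hw11, hw21]
  have h2 := Lg_opt b hb k (w1 + w2)
  rw [h1] at h2
  simp only [Pi.add_apply] at h2
  rw [Finset.sum_add_distrib, hw12, hw22] at h2
  exact h2

lemma Lg_repunit_le_one (b : ℕ) (hb : 1 ≤ b) (k : ℕ) :
    ∀ m, m ≤ k + 1 → Lg b (k+2) (repunit b m) ≤ 1 := by
  induction k with
  | zero =>
    intro m hm
    interval_cases m
    · simp [repunit_zero, Lg_two]
    · simp [repunit_one, Lg_two]
  | succ k ih =>
    intro m hm
    by_cases hcase : m = k + 2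
    · subst hcase
      have h1 : Lg b (k+1+2) (0 + 1 * repunit b (k+1+1)) = Lg b (k+1+2) 0 + 1 :=
        Lg_step_mul b (k+1) 0 1 hb
      have h2 : (0:ℕ) + 1 * repunit b (k+1+1) = repunit b (k+2) := by
        show 0 + 1 * repunit b (k+2) = repunit b (k+2); omega
      rw [h2, Lg_zero] at h1
      omega
    · have hmlt : repunit b m < repunit b (k+2) := by
        have h3 : repunit b m ≤ repunit b (k+1) := repunit_mono b (by omega)
        have h4 : repunit b (k+1) < repunit b (k+2) := repunit_lt b hb (k+1)
        omega
      have goal_eq : Lg b (k+1+2) (repunit b m) =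
          repunit b m / repunit b (k+2) + Lg b (k+2) (repunit b m % repunit b (k+2)) :=
        Lg_succ b k _
      rw [goal_eq, Nat.div_eq_of_lt hmlt, Nat.mod_eq_of_lt hmlt]
      have := ih m (by omega)
      omega

lemma aseq_one (b a i : ℕ) : aseq b a i 1 = repunit b i := by
  simp [aseq, repunit_zero]

/-- Membership in `grep` from a coin representation. -/
lemma mem_grep (b a k : ℕ) {V : ℕ} (w : Fin (k+1) → ℕ) (hV : ∑ j, w j ≤ V) :
    V * repunit b (k+2) + a * (∑ j, w j * repunit b (j.val + 1)) ∈ grep b a (k+2) := by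
  have h1 : repunit b (k+2) ∈ grep b a (k+2) :=
    AddSubmonoid.subset_closure ⟨1, le_refl 1, (aseq_one b a (k+2)).symm⟩
  have hgen : ∀ j : Fin (k+1),
      repunit b (k+2) + a * repunit b (j.val + 1) ∈ grep b a (k+2) := by
    intro j
    exact AddSubmonoid.subset_closure ⟨j.val + 2, by omega, by simp [aseq]⟩
  have key : V * repunit b (k+2) + a * (∑ j, w j * repunit b (j.val + 1)) =
      (V - ∑ j, w j) * repunit b (k+2) +
        ∑ j : Fin (k+1), w j * (repunit b (k+2) + a * repunit b (j.val + 1)) := by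
    have h2 : ∑ j : Fin (k+1), w j * (repunit b (k+2) + a * repunit b (j.val + 1)) =
        (∑ j, w j) * repunit b (k+2) + a * (∑ j, w j * repunit b (j.val + 1)) := by
      rw [Finset.sum_mul, Finset.mul_sum, ← Finset.sum_add_distrib]
      congr 1; ext j; ring
    rw [h2, ← add_assoc, ← add_mul]
    congr 2
    omega
  rw [key]
  refine AddSubmonoid.add_mem _ ?_ ?_
  · rw [show (V - ∑ j, w j) * repunit b (k+2) = (V - ∑ j, w j) • repunit b (k+2) from
      (smul_eq_mul _ _).symm]
    exact AddSubmonoid.nsmul_mem _ h1 _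
  · refine AddSubmonoid.sum_mem _ (fun j _ => ?_)
    rw [show w j * (repunit b (k+2) + a * repunit b (j.val + 1)) =
        w j • (repunit b (k+2) + a * repunit b (j.val + 1)) from (smul_eq_mul _ _).symm]
    exact AddSubmonoid.nsmul_mem _ (hgen j) _

lemma aseq_decomp (b a k : ℕ) (hb : 1 ≤ b) :
    ∀ j, 1 ≤ j → ∃ V M, aseq b a (k+2) j = V * repunit b (k+2) + a * M ∧
      Lg b (k+2) M ≤ V := by
  intro j
  induction j using Nat.strong_induction_on with
  | _ j ih =>
    intro hj
    by_cases hcase : j ≤ k + 2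
    · refine ⟨1, repunit b (j-1), ?_, ?_⟩
      · simp [aseq]
      · exact Lg_repunit_le_one b hb k (j-1) (by omega)
    · -- j = (k+2) + t with t ≥ 1
      push_neg at hcase
      set t := j - (k+2) with ht
      have ht1 : 1 ≤ t := by omega
      have htj : t < j := by omega
      obtain ⟨V, M, hVM, hL⟩ := ih t htj ht1
      refine ⟨V + a * b ^ (t-1), M, ?_, by omega⟩
      have hkey : aseq b a (k+2) j = aseq b a (k+2) t + a * (b ^ (t-1) * repunit b (k+2)) := by
        have hj1 : j - 1 = (k+2) + (t-1) := by omega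
        rw [aseq, aseq, hj1, repunit_add b (k+2) (t-1)]
        ring
      rw [hkey, hVM]
      ring

lemma grep_sub (b a k : ℕ) (hb : 1 ≤ b) :
    ∀ ω ∈ grep b a (k+2), ∃ V M, ω = V * repunit b (k+2) + a * M ∧ Lg b (k+2) M ≤ V := by
  intro ω hω
  induction hω using AddSubmonoid.closure_induction with
  | mem x hx =>
    obtain ⟨j, hj, rfl⟩ := hx
    exact aseq_decomp b a k hb j hj
  | zero => exact ⟨0, 0, by simp, by simp [Lg_zero]⟩
  | add x y hx hy ihx ihy =>
    obtain ⟨V1, M1, h1, hL1⟩ := ihx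
    obtain ⟨V2, M2, h2, hL2⟩ := ihy
    refine ⟨V1 + V2, M1 + M2, by rw [h1, h2]; ring, ?_⟩
    have := Lg_subadd b hb k M1 M2
    omega

lemma char (b a k : ℕ) (hb : 1 ≤ b) (ha : 0 < a)
    (hgcd : Nat.gcd (repunit b (k+2)) a = 1) (ω : ℕ) :
    ω ∈ Apery (grep b a (k+2)) (repunit b (k+2)) ↔
      ∃ N, N < repunit b (k+2) ∧ ω = Lg b (k+2) N * repunit b (k+2) + a * N := by
  have hr : 0 < repunit b (k+2) := repunit_pos b (by omega)
  constructor
  · rintro ⟨hω, hna⟩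
    obtain ⟨V, M, rfl, hL⟩ := grep_sub b a k hb _ hω
    obtain ⟨N, t, hNr, hMeq⟩ : ∃ N t, N < repunit b (k+2) ∧ M = N + t * repunit b (k+2) :=
      ⟨M % repunit b (k+2), M / repunit b (k+2), Nat.mod_lt _ hr,
        (Nat.mod_add_div' M (repunit b (k+2))).symm⟩
    have hLt : Lg b (k+2) N + t ≤ Lg b (k+2) M := by
      have := Lg_add_mul_self b hb k N t
      rw [← hMeq] at this; exact this
    have hωeq : V * repunit b (k+2) + a * M =
        (V + a * t) * repunit b (k+2) + a * N := by
      rw [hMeq]; ring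
    have hVle : V + a * t ≤ Lg b (k+2) N := by
      by_contra hgt
      push_neg at hgt
      obtain ⟨w, hw1, hw2⟩ := Lg_realize b hb k N
      obtain ⟨X, hX⟩ : ∃ X, V + a * t = X + 1 := ⟨V + a * t - 1, by omega⟩
      have hmem : X * repunit b (k+2) + a * N ∈ grep b a (k+2) := by
        have := mem_grep b a k (V := X) w (by omega)
        rwa [hw1] at this
      have hstep : (V + a * t) * repunit b (k+2) + a * N =
          (X * repunit b (k+2) + a * N) + repunit b (k+2) := by
        rw [hX]; ring
      exact hna ⟨X * repunit b (k+2) + a * N, hmem, by rw [hωeq, hstep]⟩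
    have hge : Lg b (k+2) N + t + a * t ≤ V + a * t := by omega
    have ht0 : t = 0 := by omega
    subst ht0
    have hVN : V = Lg b (k+2) N := by omega
    refine ⟨N, hNr, ?_⟩
    simp only [Nat.zero_mul, Nat.add_zero] at hMeq
    rw [hMeq, hVN]
  · rintro ⟨N, hNr, rfl⟩
    constructor
    · obtain ⟨w, hw1, hw2⟩ := Lg_realize b hb k N
      have := mem_grep b a k (V := Lg b (k+2) N) w (by omega)
      rwa [hw1] at this
    · rintro ⟨s, hs, heq⟩
      obtain ⟨V, M, rfl, hL⟩ := grep_sub b a k hb _ hs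
      have h1 : (a * N + Lg b (k+2) N * repunit b (k+2)) % repunit b (k+2) =
          a * N % repunit b (k+2) := Nat.add_mul_mod_self_right _ _ _
      have h2 : (a * M + repunit b (k+2) + V * repunit b (k+2)) % repunit b (k+2) =
          a * M % repunit b (k+2) := by
        rw [Nat.add_mul_mod_self_right, Nat.add_mod_right]
      have hee : a * N + Lg b (k+2) N * repunit b (k+2) =
          a * M + repunit b (k+2) + V * repunit b (k+2) := by omega
      have hmod : a * N % repunit b (k+2) = a * M % repunit b (k+2) := by
        rw [← h1, hee, h2]
      have hNM : N ≡ M [MOD repunit b (k+2)] := Nat.ModEq.cancel_left_of_coprime hgcd hmod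
      rcases le_total N M with hle | hle
      · obtain ⟨t, htM⟩ : ∃ t, M = N + t * repunit b (k+2) := by
          obtain ⟨t, ht⟩ := (Nat.modEq_iff_dvd' hle).mp hNM
          rw [Nat.mul_comm] at ht
          exact ⟨t, by omega⟩
        have hLM : Lg b (k+2) N + t ≤ Lg b (k+2) M := by
          have := Lg_add_mul_self b hb k N t
          rw [← htM] at this; exact this
        have hexp : a * M = a * N + (a * t) * repunit b (k+2) := by rw [htM]; ring
        have heq2 : Lg b (k+2) N * repunit b (k+2) =
            (V + 1 + a * t) * repunit b (k+2) := by
          have hexp2 : (V + 1 + a * t) * repunit b (k+2) =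
              V * repunit b (k+2) + repunit b (k+2) + (a * t) * repunit b (k+2) := by ring
          omega
        have heq3 : Lg b (k+2) N = V + 1 + a * t := Nat.eq_of_mul_eq_mul_right hr heq2
        omega
      · obtain ⟨t, htN⟩ : ∃ t, N = M + t * repunit b (k+2) := by
          obtain ⟨t, ht⟩ := (Nat.modEq_iff_dvd' hle).mp hNM.symm
          rw [Nat.mul_comm] at ht
          exact ⟨t, by omega⟩
        have ht0 : t = 0 := by
          rcases Nat.eq_zero_or_pos t with h | h
          · exact h
          · exfalso
            have h2 : 1 * repunit b (k+2) ≤ t * repunit b (k+2) := Nat.mul_le_mul_right _ h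
            omega
        subst ht0
        simp only [Nat.zero_mul, Nat.add_zero] at htN
        subst htN
        have heq2 : Lg b (k+2) N * repunit b (k+2) = (V + 1) * repunit b (k+2) := by
          have hexp2 : (V + 1) * repunit b (k+2) =
              V * repunit b (k+2) + repunit b (k+2) := by ring
          omega
        have heq3 : Lg b (k+2) N = V + 1 := Nat.eq_of_mul_eq_mul_right hr heq2
        omega

lemma Lg_top (b k : ℕ) (hb : 1 ≤ b) : Lg b (k+3) (b * repunit b (k+2)) = b := by
  have h : Lg b (k+3) (0 + b * repunit b (k+2)) = Lg b (k+3) 0 + b :=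
    Lg_step_mul b (k+1) 0 b hb
  rw [Lg_zero, zero_add] at h
  omega

lemma Lg_split (b k : ℕ) (hb : 1 ≤ b) {N' : ℕ} (hN' : N' < repunit b (k+2)) (c : ℕ) :
    Lg b (k+3) (N' + c * repunit b (k+2)) = c + Lg b (k+2) N' := by
  have h1 : Lg b (k+3) (N' + c * repunit b (k+2)) = Lg b (k+3) N' + c :=
    Lg_step_mul b (k+1) N' c hb
  have h2 : Lg b (k+3) N' = N' / repunit b (k+2) + Lg b (k+2) (N' % repunit b (k+2)) :=
    Lg_succ b k N'
  rw [h1, h2, Nat.div_eq_of_lt hN', Nat.mod_eq_of_lt hN']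
  omega

lemma aseq_sum_split (b a k : ℕ) (u : Fin (k+2) → ℕ) :
    ∑ j : Fin (k+2), u j * aseq b a (k+2) (j.val + 1) =
      (∑ j : Fin (k+2), u j) * repunit b (k+2) +
        a * ∑ j : Fin (k+1), u j.succ * repunit b (j.val + 1) := by
  rw [Fin.sum_univ_succ (f := fun j : Fin (k+2) => u j * aseq b a (k+2) (j.val + 1)),
      Fin.sum_univ_succ (f := fun j : Fin (k+2) => u j)]
  have h1 : aseq b a (k+2) (0 + 1) = repunit b (k+2) := aseq_one b a (k+2)
  have h2 : ∀ j : Fin (k+1),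
      u j.succ * aseq b a (k+2) (j.succ.val + 1) =
        u j.succ * (repunit b (k+2) + a * repunit b (j.val + 1)) := by
    intro j
    have : aseq b a (k+2) (j.succ.val + 1) = repunit b (k+2) + a * repunit b (j.val + 1) := by
      show repunit b (k+2) + a * repunit b (j.val + 1 + 1 - 1) = _
      rfl
    rw [this]
  rw [Finset.sum_congr rfl (fun j _ => h2 j)]
  have h3 : ∑ j : Fin (k+1), u j.succ * (repunit b (k+2) + a * repunit b (j.val + 1)) =
      (∑ j : Fin (k+1), u j.succ) * repunit b (k+2) +
        a * ∑ j : Fin (k+1), u j.succ * repunit b (j.val + 1) := by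
    rw [Finset.sum_mul, Finset.mul_sum, ← Finset.sum_add_distrib]
    exact Finset.sum_congr rfl fun j _ => by ring
  rw [h3]
  simp only [Fin.val_zero, h1]
  ring

lemma rep_unique (b a k : ℕ) (hb : 1 ≤ b)
    (hgcd : Nat.gcd (repunit b (k+2)) a = 1)
    {V M N : ℕ} (hNr : N < repunit b (k+2)) (hL : Lg b (k+2) M ≤ V)
    (h : V * repunit b (k+2) + a * M = Lg b (k+2) N * repunit b (k+2) + a * N) :
    M = N ∧ V = Lg b (k+2) N := by
  have hr : 0 < repunit b (k+2) := repunit_pos b (by omega)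
  have h1 : (a * M + V * repunit b (k+2)) % repunit b (k+2) = a * M % repunit b (k+2) :=
    Nat.add_mul_mod_self_right _ _ _
  have h2 : (a * N + Lg b (k+2) N * repunit b (k+2)) % repunit b (k+2) =
      a * N % repunit b (k+2) := Nat.add_mul_mod_self_right _ _ _
  have hee : a * M + V * repunit b (k+2) =
      a * N + Lg b (k+2) N * repunit b (k+2) := by omega
  have hmod : a * M % repunit b (k+2) = a * N % repunit b (k+2) := by
    rw [← h1, hee, h2]
  have hMN : M ≡ N [MOD repunit b (k+2)] := Nat.ModEq.cancel_left_of_coprime hgcd hmod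
  rcases le_total N M with hle | hle
  · obtain ⟨t, htM⟩ : ∃ t, M = N + t * repunit b (k+2) := by
      obtain ⟨t, ht⟩ := (Nat.modEq_iff_dvd' hle).mp hMN.symm
      rw [Nat.mul_comm] at ht
      exact ⟨t, by omega⟩
    have hLM : Lg b (k+2) N + t ≤ Lg b (k+2) M := by
      have := Lg_add_mul_self b hb k N t
      rw [← htM] at this; exact this
    have hexp : a * M = a * N + (a * t) * repunit b (k+2) := by rw [htM]; ring
    have heq2 : (V + a * t) * repunit b (k+2) = Lg b (k+2) N * repunit b (k+2) := by
      have hexp2 : (V + a * t) * repunit b (k+2) =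
          V * repunit b (k+2) + (a * t) * repunit b (k+2) := by ring
      omega
    have heq3 : V + a * t = Lg b (k+2) N := Nat.eq_of_mul_eq_mul_right hr heq2
    have ht0 : t = 0 := by omega
    subst ht0
    constructor
    · omega
    · omega
  · obtain ⟨t, htN⟩ : ∃ t, N = M + t * repunit b (k+2) := by
      obtain ⟨t, ht⟩ := (Nat.modEq_iff_dvd' hle).mp hMN
      rw [Nat.mul_comm] at ht
      exact ⟨t, by omega⟩
    have ht0 : t = 0 := by
      rcases Nat.eq_zero_or_pos t with h' | h'
      · exact h'
      · exfalso
        have h2' : 1 * repunit b (k+2) ≤ t * repunit b (k+2) := Nat.mul_le_mul_right _ h'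
        omega
    subst ht0
    simp only [Nat.zero_mul, Nat.add_zero] at htN
    subst htN
    have heq2 : V * repunit b (k+2) = Lg b (k+2) N * repunit b (k+2) := by omega
    exact ⟨rfl, Nat.eq_of_mul_eq_mul_right hr heq2⟩

theorem stmt_9 (b a n i : ℕ) (hb : 1 < b) (hn : 1 < n) (ha : 0 < a)
    (hi : 3 ≤ i) (hin : i ≤ n) (hgcd : Nat.gcd (repunit b i) a = 1)
    (hgcd' : Nat.gcd (repunit b (i - 1)) a = 1) :
    ∀ ω : ℕ, ω ∈ Apery (grep b a i) (repunit b i) ↔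
      (ω = b * aseq b a i i ∨
        ∃ ω' ∈ Apery (grep b a (i - 1)) (repunit b (i - 1)), ∃ m : ℕ,
          IsLength b a (i - 1) ω' m ∧
          ∃ ui < b, ω = ω' + b ^ (i - 1) * m + ui * aseq b a i i) := by
  obtain ⟨k, rfl⟩ : ∃ k, i = k + 3 := ⟨i - 3, by omega⟩
  have hb1 : 1 ≤ b := by omega
  have hgcd'' : Nat.gcd (repunit b (k+2)) a = 1 := hgcd'
  have hr' : 0 < repunit b (k+2) := repunit_pos b (by omega)
  have hrr : repunit b (k+3) = b * repunit b (k+2) + 1 := repunit_succ2 b (k+1)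
  have hsucc : repunit b (k+3) = repunit b (k+2) + b ^ (k+2) := repunit_succ' b (k+2)
  have haseq_i : aseq b a (k+3) (k+3) = repunit b (k+3) + a * repunit b (k+2) := rfl
  intro ω
  simp only [show k + 3 - 1 = k + 2 from rfl]
  have hchar3 : ω ∈ Apery (grep b a (k+3)) (repunit b (k+3)) ↔
      ∃ N, N < repunit b (k+3) ∧ ω = Lg b (k+3) N * repunit b (k+3) + a * N :=
    char b a (k+1) hb1 ha hgcd ω
  rw [hchar3]
  constructor
  · rintro ⟨N, hNr, rfl⟩
    by_cases hN1 : N = b * repunit b (k+2)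
    · left
      subst hN1
      rw [haseq_i, Lg_top b k hb1]
      ring
    · right
      have hNlt : N < b * repunit b (k+2) := by omega
      obtain ⟨c, N', hc, hN'r, hNeq⟩ :
          ∃ c N', c < b ∧ N' < repunit b (k+2) ∧ N = N' + c * repunit b (k+2) :=
        ⟨N / repunit b (k+2), N % repunit b (k+2),
          (Nat.div_lt_iff_lt_mul hr').mpr hNlt, Nat.mod_lt _ hr',
          (Nat.mod_add_div' N _).symm⟩
      obtain ⟨w, hw1, hw2⟩ := Lg_realize b hb1 k N'
      refine ⟨Lg b (k+2) N' * repunit b (k+2) + a * N', ?_, Lg b (k+2) N', ?_, c, hc, ?_⟩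
      · exact (char b a k hb1 ha hgcd'' _).mpr ⟨N', hN'r, rfl⟩
      · -- IsLength
        refine ⟨Fin.cons 0 w, ?_, ?_⟩
        · rw [aseq_sum_split b a k]
          have hs1 : ∑ j : Fin (k+2), (Fin.cons 0 w : Fin (k+2) → ℕ) j =
              ∑ j : Fin (k+1), w j := by
            rw [Fin.sum_univ_succ]
            simp [Fin.cons_succ]
          have hs2 : ∑ j : Fin (k+1),
              (Fin.cons 0 w : Fin (k+2) → ℕ) j.succ * repunit b (j.val + 1) = N' := by
            rw [← hw1]
            exact Finset.sum_congr rfl fun j _ => by rw [Fin.cons_succ]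
          rw [hs1, hs2, hw2]
        · have hs1 : ∑ j : Fin (k+2), (Fin.cons 0 w : Fin (k+2) → ℕ) j =
              ∑ j : Fin (k+1), w j := by
            rw [Fin.sum_univ_succ]
            simp [Fin.cons_succ]
          rw [hs1, hw2]
      · rw [haseq_i, hNeq, Lg_split b k hb1 hN'r c, hsucc]
        ring
  · rintro (rfl | ⟨ω', hω', m, ⟨u, hu1, hu2⟩, c, hc, rfl⟩)
    · refine ⟨b * repunit b (k+2), by omega, ?_⟩
      rw [haseq_i, Lg_top b k hb1]
      ring
    · obtain ⟨N', hN'r, hω'eq⟩ := (char b a k hb1 ha hgcd'' ω').mp hω'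
      have hsplit := aseq_sum_split b a k u
      have hm0 : ∑ j : Fin (k+2), u j = u 0 + ∑ j : Fin (k+1), u j.succ :=
        Fin.sum_univ_succ _
      have hopt : Lg b (k+2) (∑ j : Fin (k+1), u j.succ * repunit b (j.val + 1)) ≤
          ∑ j : Fin (k+1), u j.succ := Lg_opt b hb1 k (fun j => u j.succ)
      have hrep : m * repunit b (k+2) +
          a * ∑ j : Fin (k+1), u j.succ * repunit b (j.val + 1) =
          Lg b (k+2) N' * repunit b (k+2) + a * N' := by
        rw [hu2, ← hsplit, ← hu1, hω'eq]
      obtain ⟨hMN, hmval⟩ := rep_unique b a k hb1 hgcd'' hN'r (by omega) hrep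
      refine ⟨N' + c * repunit b (k+2), ?_, ?_⟩
      · have h1 : N' + c * repunit b (k+2) < (c+1) * repunit b (k+2) := by
          have : (c+1) * repunit b (k+2) = c * repunit b (k+2) + repunit b (k+2) := by ring
          omega
        have h2 : (c+1) * repunit b (k+2) ≤ b * repunit b (k+2) :=
          Nat.mul_le_mul_right _ (by omega)
        omega
      · rw [Lg_split b k hb1 hN'r c, hω'eq, hmval, haseq_i, hsucc]
        ring
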